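/- arXiv:2208.14669 — 9 statements merged into one kernel-verified Lean document; each statement's English description precedes it below -/
import Mathlib

section
/- Within any block of the DTW pattern-matching table, values are non-decreasing downwards and rightwards: for a block B = D[i_p..j_p, i_t..j_t] and any cell (a,b) in B, if i_p ≤ a < j_p then D[a,b] ≤ D[a+1,b], and if i_t ≤ b < j_t then D[a,b] ≤ D[a,b+1]. -/
open scoped ENNReal

/-!
Inside a block the cell `(a, b)` and its lower neighbour `(a+1, b)` carry the same local cost `c`.
By induction on `b`, each of the three cells entering the minimum for `D (a+1) b` is, after adding
`c`, at least `D a b`: the left one `(a+1, b-1)` by the induction hypothesis and the recurrence for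
`D a b`, the upper-left one `(a, b-1)` by the recurrence for `D a b`, and the upper one trivially.
Rightward monotonicity is the transposed argument, by induction on `a`; the inductions start at
the border column `D i 0 = ⊤` and row `D 0 j = 0`.
-/

namespace DTW

variable {α R : Type*} [AddCommMonoid R] [LinearOrder R] [IsOrderedAddMonoid R]
  (d : α → α → R) (P T : ℕ → α) (D : ℕ → ℕ → R)

/-- The DTW recurrence, indexed so that no natural-number subtraction occurs. -/
def IsRecurrence : Prop :=
  ∀ i j, D (i + 1) (j + 1) =
    min (min (D i j) (D i (j + 1))) (D (i + 1) j) + d (P (i + 1)) (T (j + 1))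

variable {d P T D}

lemma le_min_min_add {x a b c e : R} (ha : x ≤ a + e) (hb : x ≤ b + e) (hc : x ≤ c + e) :
    x ≤ min (min a b) c + e := by
  rw [← min_add_add_right, ← min_add_add_right]
  exact le_min (le_min ha hb) hc

lemma IsRecurrence.le_left (hD : IsRecurrence d P T D) (i j : ℕ) :
    D (i + 1) (j + 1) ≤ D (i + 1) j + d (P (i + 1)) (T (j + 1)) := by
  rw [hD]
  exact add_le_add_left (min_le_right _ _) _

lemma IsRecurrence.le_up (hD : IsRecurrence d P T D) (i j : ℕ) :
    D (i + 1) (j + 1) ≤ D i (j + 1) + d (P (i + 1)) (T (j + 1)) := by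
  rw [hD]
  exact add_le_add_left ((min_le_left _ _).trans (min_le_right _ _)) _

lemma IsRecurrence.le_succ_row [CanonicallyOrderedAdd R] [OrderTop R]
    (hD : IsRecurrence d P T D) (hD0 : ∀ j, D 0 j = 0) (hDi0 : ∀ i, 1 ≤ i → D i 0 = ⊤)
    {a : ℕ} (hPa : P (a + 1) = P a) (b : ℕ) : D a b ≤ D (a + 1) b := by
  cases a with
  | zero =>
    rw [hD0]
    exact zero_le
  | succ i =>
    induction b with
    | zero => rw [hDi0 _ (by omega), hDi0 _ (by omega)]
    | succ j ih =>
      rw [hD (i + 1) j, hPa]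
      exact le_min_min_add (hD.le_left i j) le_self_add ((hD.le_left i j).trans (by gcongr))

lemma IsRecurrence.le_succ_col [CanonicallyOrderedAdd R] (hD : IsRecurrence d P T D)
    (hD0 : ∀ j, D 0 j = 0)
    {j : ℕ} (hTj : T (j + 2) = T (j + 1)) (a : ℕ) : D a (j + 1) ≤ D a (j + 2) := by
  induction a with
  | zero => rw [hD0, hD0]
  | succ i ih =>
    rw [hD i (j + 1), hTj]
    exact le_min_min_add (hD.le_up i j) ((hD.le_up i j).trans (by gcongr)) le_self_add

end DTW

theorem block_monotone_general {α : Type*} (d : α → α → ℝ≥0∞) (P T : ℕ → α)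
    (D : ℕ → ℕ → ℝ≥0∞)
    (hD0 : ∀ j, D 0 j = 0) (hDi0 : ∀ i, 1 ≤ i → D i 0 = ⊤)
    (hrec : ∀ i j, 1 ≤ i → 1 ≤ j →
      D i j = min (min (D (i - 1) (j - 1)) (D (i - 1) j)) (D i (j - 1))
        + d (P i) (T j))
    (ip jp it jt : ℕ) (hit0 : it = 0 → jt = 0)
    (hP : ∀ x, ip ≤ x → x ≤ jp → P x = P ip)
    (hT : ∀ y, it ≤ y → y ≤ jt → T y = T it)
    (a b : ℕ) (ha1 : ip ≤ a) (ha2 : a ≤ jp) (hb1 : it ≤ b) (hb2 : b ≤ jt) :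
    (a < jp → D a b ≤ D (a + 1) b) ∧ (b < jt → D a b ≤ D a (b + 1)) := by
  have hD : DTW.IsRecurrence d P T D := fun i j => by
    simpa using hrec (i + 1) (j + 1) (by omega) (by omega)
  refine ⟨fun ha => ?_, fun hb => ?_⟩
  · exact hD.le_succ_row hD0 hDi0 (by rw [hP _ ha1 ha2, hP _ (by omega) ha]) b
  · obtain ⟨j, rfl⟩ : ∃ j, b = j + 1 := ⟨b - 1, by omega⟩
    exact hD.le_succ_col hD0 (by rw [hT _ hb1 hb2, hT _ (by omega) hb]) a

/-- within any block of the DTW pattern-matching table (a rectangle on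
which the pattern letters and text letters are constant, i.e. coming from runs, where
row 0 / column 0 may only occur as the degenerate blocks `i_p = j_p = 0`,
`i_t = j_t = 0`), values are non-decreasing downwards and rightwards. -/
theorem block_monotone {α : Type*} (d : α → α → ℝ≥0∞) (P T : ℕ → α)
    (hrefl : ∀ a, d a a = 0) (hpos : ∀ a b, a ≠ b → 0 < d a b)
    (D : ℕ → ℕ → ℝ≥0∞)
    (hD0 : ∀ j, D 0 j = 0) (hDi0 : ∀ i, 1 ≤ i → D i 0 = ⊤)
    (hrec : ∀ i j, 1 ≤ i → 1 ≤ j →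
      D i j = min (min (D (i - 1) (j - 1)) (D (i - 1) j)) (D i (j - 1))
        + d (P i) (T j))
    (ip jp it jt : ℕ) (hip0 : ip = 0 → jp = 0) (hit0 : it = 0 → jt = 0)
    (hP : ∀ x, ip ≤ x → x ≤ jp → P x = P ip)
    (hT : ∀ y, it ≤ y → y ≤ jt → T y = T it)
    (a b : ℕ) (ha1 : ip ≤ a) (ha2 : a ≤ jp) (hb1 : it ≤ b) (hb2 : b ≤ jt) :
    (a < jp → D a b ≤ D (a + 1) b) ∧ (b < jt → D a b ≤ D a (b + 1)) :=
  block_monotone_general d P T D hD0 hDi0 hrec ip jp it jt hit0 hP hT a b ha1 ha2 hb1 hb2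
end

section
/- Every homogeneous block of the DTW table is a q-block for some value q: if P[i_p..j_p] is a run in P, T[i_t..j_t] is a run in T, and P[i_p] = T[i_t], then all cells D[a,b] with i_p ≤ a ≤ j_p and i_t ≤ b ≤ j_t have the same value. -/
/-!
Inside a homogeneous block the cost vanishes, so each cell is the minimum of its three
predecessors and the block is antitone in both coordinates: every cell is at most the corner
`D[i_p, i_t]`. Conversely, along a run of `T` the costs in each row agree, and induction on the
row shows that `D[i, i_t] ≤ D[i, j]` for every row `i` and every column `j` of the run; the
same holds for rows of a run of `P` by transposing the table. Chaining the two gives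
`D[i_p, i_t] ≤ D[a, b]` in the block.
-/

open scoped ENNReal

section

variable {M : Type*} [AddCommMonoid M] [LinearOrder M]

def DTWRecurrence (c D : ℕ → ℕ → M) : Prop :=
  ∀ i j, 1 ≤ i → 1 ≤ j → D i j = min (min (D (i - 1) (j - 1)) (D (i - 1) j)) (D i (j - 1)) + c i j

namespace DTWRecurrence

variable {c D : ℕ → ℕ → M}

theorem transpose (h : DTWRecurrence c D) :
    DTWRecurrence (fun j i => c i j) (fun j i => D i j) := by
  intro j i hj hi
  beta_reduce
  rw [h i j hi hj, min_right_comm]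

theorem succ_succ (h : DTWRecurrence c D) (i j : ℕ) :
    D (i + 1) (j + 1) = min (min (D i j) (D i (j + 1))) (D (i + 1) j) + c (i + 1) (j + 1) := by
  simpa using h (i + 1) (j + 1) le_add_self le_add_self

variable [IsOrderedAddMonoid M]

theorem le_sub_one_left_add (h : DTWRecurrence c D) {i j : ℕ} (hi : 1 ≤ i) (hj : 1 ≤ j) :
    D i j ≤ D (i - 1) j + c i j := by
  rw [h i j hi hj]
  exact add_le_add_left ((min_le_left _ _).trans (min_le_right _ _)) _

theorem le_sub_one_right_add (h : DTWRecurrence c D) {i j : ℕ} (hi : 1 ≤ i) (hj : 1 ≤ j) :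
    D i j ≤ D i (j - 1) + c i j := by
  rw [h i j hi hj]
  exact add_le_add_left (min_le_right _ _) _

variable {i₀ i₁ j₀ j₁ : ℕ}

theorem le_of_cost_eq_zero_right (h : DTWRecurrence c D) {i : ℕ} (hi : 1 ≤ i)
    (hc : ∀ j, j₀ ≤ j → j ≤ j₁ → c i j = 0) :
    ∀ j, j₀ ≤ j → j ≤ j₁ → D i j ≤ D i j₀ := by
  intro j hj
  induction j, hj using Nat.le_induction with
  | base => exact fun _ => le_rfl
  | succ j hj ihj =>
    intro hj₁
    calc D i (j + 1) ≤ D i j + c i (j + 1) := by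
          simpa using h.le_sub_one_right_add hi le_add_self
      _ = D i j := by rw [hc _ (hj.trans j.le_succ) hj₁, add_zero]
      _ ≤ D i j₀ := ihj (j.le_succ.trans hj₁)

theorem le_of_cost_eq_zero_left (h : DTWRecurrence c D) {j : ℕ} (hj : 1 ≤ j)
    (hc : ∀ i, i₀ ≤ i → i ≤ i₁ → c i j = 0) :
    ∀ i, i₀ ≤ i → i ≤ i₁ → D i j ≤ D i₀ j :=
  h.transpose.le_of_cost_eq_zero_right hj hc

variable [CanonicallyOrderedAdd M]

theorem le_of_cost_const_right (h : DTWRecurrence c D) (hj₀ : 1 ≤ j₀)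
    (hc : ∀ i j, j₀ ≤ j → j ≤ j₁ → c i j = c i j₀)
    (h0 : ∀ j, j₀ ≤ j → j ≤ j₁ → D 0 j₀ ≤ D 0 j) :
    ∀ i j, j₀ ≤ j → j ≤ j₁ → D i j₀ ≤ D i j := by
  intro i
  induction i with
  | zero => exact h0
  | succ i ih =>
    have hcorner : D (i + 1) j₀ ≤ D i j₀ + c (i + 1) j₀ := by
      simpa using h.le_sub_one_left_add le_add_self hj₀
    intro j hj
    induction j, hj using Nat.le_induction with
    | base => exact fun _ => le_rfl
    | succ j hj ihj =>
      intro hj₁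
      rw [h.succ_succ, hc _ _ (hj.trans j.le_succ) hj₁, ← min_add_add_right, ← min_add_add_right]
      refine le_min (le_min ?_ ?_) ?_
      · exact hcorner.trans (add_le_add_left (ih j hj (j.le_succ.trans hj₁)) _)
      · exact hcorner.trans (add_le_add_left (ih (j + 1) (hj.trans j.le_succ) hj₁) _)
      · exact le_add_right (ihj (j.le_succ.trans hj₁))

theorem le_of_cost_const_left (h : DTWRecurrence c D) (hi₀ : 1 ≤ i₀)
    (hc : ∀ i j, i₀ ≤ i → i ≤ i₁ → c i j = c i₀ j)
    (h0 : ∀ i, i₀ ≤ i → i ≤ i₁ → D i₀ 0 ≤ D i 0) :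
    ∀ i j, i₀ ≤ i → i ≤ i₁ → D i₀ j ≤ D i j :=
  fun i j => h.transpose.le_of_cost_const_right hi₀ (fun j i => hc i j) h0 j i

theorem eq_of_mem_block (h : DTWRecurrence c D) (hi₀ : 1 ≤ i₀) (hj₀ : 1 ≤ j₀)
    (hrow : ∀ i j, i₀ ≤ i → i ≤ i₁ → c i j = c i₀ j)
    (hcol : ∀ i j, j₀ ≤ j → j ≤ j₁ → c i j = c i j₀) (hzero : c i₀ j₀ = 0)
    (h0 : ∀ j, j₀ ≤ j → j ≤ j₁ → D 0 j₀ ≤ D 0 j)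
    (h0' : ∀ i, i₀ ≤ i → i ≤ i₁ → D i₀ 0 ≤ D i 0)
    {i j : ℕ} (hi : i₀ ≤ i) (hi₁ : i ≤ i₁) (hj : j₀ ≤ j) (hj₁ : j ≤ j₁) :
    D i j = D i₀ j₀ := by
  have hc : ∀ i j, i₀ ≤ i → i ≤ i₁ → j₀ ≤ j → j ≤ j₁ → c i j = 0 := by
    intro i j hi hi₁ hj hj₁
    rw [hrow i j hi hi₁, hcol i₀ j hj hj₁, hzero]
  refine le_antisymm ?_ ?_
  · calc D i j ≤ D i₀ j :=
          h.le_of_cost_eq_zero_left (hj₀.trans hj) (fun i hi hi₁ => hc i j hi hi₁ hj hj₁) i hi hi₁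
      _ ≤ D i₀ j₀ :=
          h.le_of_cost_eq_zero_right hi₀ (fun j hj hj₁ => hc i₀ j le_rfl (hi.trans hi₁) hj hj₁) j hj hj₁
  · calc D i₀ j₀ ≤ D i j₀ := h.le_of_cost_const_left hi₀ hrow h0' i j₀ hi hi₁
      _ ≤ D i j := h.le_of_cost_const_right hj₀ hcol h0 i j hj hj₁

end DTWRecurrence

end

theorem homogeneous_block_constant_general {α : Type*} (d : α → α → ℝ≥0∞) (P T : ℕ → α)
    (hrefl : ∀ a, d a a = 0)
    (D : ℕ → ℕ → ℝ≥0∞)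
    (hD0 : ∀ j, D 0 j = 0) (hDi0 : ∀ i, 1 ≤ i → D i 0 = ⊤)
    (hrec : ∀ i j, 1 ≤ i → 1 ≤ j →
      D i j = min (min (D (i - 1) (j - 1)) (D (i - 1) j)) (D i (j - 1))
        + d (P i) (T j))
    (ip jp it jt : ℕ) (hip : 1 ≤ ip) (hit : 1 ≤ it)
    (hP : ∀ x, ip ≤ x → x ≤ jp → P x = P ip)
    (hT : ∀ y, it ≤ y → y ≤ jt → T y = T it)
    (hhom : P ip = T it) :
    ∀ a b a' b', ip ≤ a → a ≤ jp → it ≤ b → b ≤ jt →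
      ip ≤ a' → a' ≤ jp → it ≤ b' → b' ≤ jt → D a b = D a' b' := by
  have hD : DTWRecurrence (fun i j => d (P i) (T j)) D := hrec
  have hblock {a b : ℕ} : ip ≤ a → a ≤ jp → it ≤ b → b ≤ jt → D a b = D ip it :=
    hD.eq_of_mem_block hip hit
      (fun i j hi hi₁ => by rw [hP i hi hi₁]) (fun i j hj hj₁ => by rw [hT j hj hj₁])
      (by rw [hhom, hrefl]) (fun j _ _ => by rw [hD0, hD0])
      (fun i hi _ => by rw [hDi0 i (hip.trans hi)]; exact le_top)
  intro a b a' b' ha ha₁ hb hb₁ ha' ha₁' hb' hb₁'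
  rw [hblock ha ha₁ hb hb₁, hblock ha' ha₁' hb' hb₁']

/-- every homogeneous block of the DTW table (formed by a run of `P` and
a run of `T` consisting of the same letter) is a `q`-block: all its cells carry the
same value. -/
theorem homogeneous_block_constant {α : Type*} (d : α → α → ℝ≥0∞) (P T : ℕ → α)
    (hrefl : ∀ a, d a a = 0) (hpos : ∀ a b, a ≠ b → 0 < d a b)
    (D : ℕ → ℕ → ℝ≥0∞)
    (hD0 : ∀ j, D 0 j = 0) (hDi0 : ∀ i, 1 ≤ i → D i 0 = ⊤)
    (hrec : ∀ i j, 1 ≤ i → 1 ≤ j →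
      D i j = min (min (D (i - 1) (j - 1)) (D (i - 1) j)) (D i (j - 1))
        + d (P i) (T j))
    (ip jp it jt : ℕ) (hip : 1 ≤ ip) (hit : 1 ≤ it)
    (hP : ∀ x, ip ≤ x → x ≤ jp → P x = P ip)
    (hT : ∀ y, it ≤ y → y ≤ jt → T y = T it)
    (hhom : P ip = T it) :
    ∀ a b a' b', ip ≤ a → a ≤ jp → it ≤ b → b ≤ jt →
      ip ≤ a' → a' ≤ jp → it ≤ b' → b' ≤ jt → D a b = D a' b' :=
  homogeneous_block_constant_general d P T hrefl D hD0 hDi0 hrec ip jp it jt hip hit hP hT hhom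
end

section
/- For a block B = D[i_p..j_p, i_t..j_t] of the DTW table with width w = j_t − i_t and letter distance d = d(P[i_p],T[i_t]), the values in the rightmost column of B satisfy: for every i_p < x ≤ j_p, D[x,j_t] = D[i_p, j_t−(x−i_p)] + (x−i_p)·d if x−i_p ≤ w, and D[x,j_t] = D[x−w, i_t] + w·d otherwise. -/
/-!
Inside a block the letter distance is a constant `c`, and the table is monotone along a run:
if `T v = T (v + 1)` then `D u v ≤ D u (v + 1)`, and symmetrically for `P`, since every
warping path ending at `(u, v + 1)` can be rerouted to end at `(u, v)` without extra cost.
Hence at any cell whose upper-left neighbour still lies in the block, the diagonal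
predecessor attains the minimum, and `D` grows by exactly `c` along each diagonal step.
Following the diagonal from `(x, j_t)` back to the top row or the left column of the block
gives the two cases.
-/

open scoped ENNReal

section DTW

variable {α : Type*} (d : α → α → ℝ≥0∞) (P T : ℕ → α) (D : ℕ → ℕ → ℝ≥0∞)

theorem dtw_le_succ_right_of_text_eq (hD0 : ∀ j, D 0 j = 0)
    (hrec : ∀ i j, 1 ≤ i → 1 ≤ j →
      D i j = min (min (D (i - 1) (j - 1)) (D (i - 1) j)) (D i (j - 1)) + d (P i) (T j))
    {v : ℕ} (hv : 1 ≤ v) (hT : T v = T (v + 1)) (u : ℕ) :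
    D u v ≤ D u (v + 1) := by
  induction u with
  | zero => rw [hD0, hD0]
  | succ u ih =>
    have hstep : D (u + 1) v ≤ D u v + d (P (u + 1)) (T (v + 1)) := by
      rw [hrec (u + 1) v (by omega) hv, hT, Nat.add_sub_cancel]
      gcongr
      exact (min_le_left _ _).trans (min_le_right _ _)
    rw [hrec (u + 1) (v + 1) (by omega) (by omega)]
    simp only [Nat.add_sub_cancel, ← min_add_add_right]
    exact le_min (le_min hstep (hstep.trans (by gcongr))) le_self_add

theorem dtw_le_succ_down_of_pattern_eq (hDi0 : ∀ i, 1 ≤ i → D i 0 = ⊤)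
    (hrec : ∀ i j, 1 ≤ i → 1 ≤ j →
      D i j = min (min (D (i - 1) (j - 1)) (D (i - 1) j)) (D i (j - 1)) + d (P i) (T j))
    {u : ℕ} (hu : 1 ≤ u) (hP : P u = P (u + 1)) (v : ℕ) :
    D u v ≤ D (u + 1) v := by
  induction v with
  | zero => rw [hDi0 u hu, hDi0 (u + 1) (by omega)]
  | succ v ih =>
    have hstep : D u (v + 1) ≤ D u v + d (P (u + 1)) (T (v + 1)) := by
      rw [hrec u (v + 1) hu (by omega), hP, Nat.add_sub_cancel]
      gcongr
      exact min_le_right _ _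
    rw [hrec (u + 1) (v + 1) (by omega) (by omega)]
    simp only [Nat.add_sub_cancel, ← min_add_add_right]
    exact le_min (le_min hstep le_self_add) (hstep.trans (by gcongr))

theorem dtw_succ_succ_of_eq (hD0 : ∀ j, D 0 j = 0) (hDi0 : ∀ i, 1 ≤ i → D i 0 = ⊤)
    (hrec : ∀ i j, 1 ≤ i → 1 ≤ j →
      D i j = min (min (D (i - 1) (j - 1)) (D (i - 1) j)) (D i (j - 1)) + d (P i) (T j))
    {u v : ℕ} (hu : 1 ≤ u) (hv : 1 ≤ v) (hP : P u = P (u + 1)) (hT : T v = T (v + 1)) :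
    D (u + 1) (v + 1) = D u v + d (P (u + 1)) (T (v + 1)) := by
  have hrow := dtw_le_succ_right_of_text_eq d P T D hD0 hrec hv hT u
  have hcol := dtw_le_succ_down_of_pattern_eq d P T D hDi0 hrec hu hP v
  rw [hrec (u + 1) (v + 1) (by omega) (by omega)]
  simp only [Nat.add_sub_cancel, min_eq_left hrow, min_eq_left hcol]

theorem dtw_add_add_of_runs (hD0 : ∀ j, D 0 j = 0) (hDi0 : ∀ i, 1 ≤ i → D i 0 = ⊤)
    (hrec : ∀ i j, 1 ≤ i → 1 ≤ j →
      D i j = min (min (D (i - 1) (j - 1)) (D (i - 1) j)) (D i (j - 1)) + d (P i) (T j))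
    {a b m : ℕ} (ha : 1 ≤ a) (hb : 1 ≤ b)
    (hP : ∀ k ≤ m, P (a + k) = P a) (hT : ∀ k ≤ m, T (b + k) = T b) :
    D (a + m) (b + m) = D a b + (m : ℝ≥0∞) * d (P a) (T b) := by
  induction m with
  | zero => simp
  | succ m ih =>
    have hPm : P (a + m) = P (a + m + 1) := by rw [hP m (by omega), ← hP (m + 1) le_rfl]; rfl
    have hTm : T (b + m) = T (b + m + 1) := by rw [hT m (by omega), ← hT (m + 1) le_rfl]; rfl
    rw [← add_assoc, ← add_assoc,
      dtw_succ_succ_of_eq d P T D hD0 hDi0 hrec (by omega) (by omega) hPm hTm,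
      ih (fun k hk ↦ hP k (by omega)) (fun k hk ↦ hT k (by omega)),
      ← hPm, ← hTm, hP m (by omega), hT m (by omega)]
    push_cast
    ring

end DTW

theorem block_right_column_general {α : Type*} (d : α → α → ℝ≥0∞) (P T : ℕ → α)
    (D : ℕ → ℕ → ℝ≥0∞)
    (hD0 : ∀ j, D 0 j = 0) (hDi0 : ∀ i, 1 ≤ i → D i 0 = ⊤)
    (hrec : ∀ i j, 1 ≤ i → 1 ≤ j →
      D i j = min (min (D (i - 1) (j - 1)) (D (i - 1) j)) (D i (j - 1))
        + d (P i) (T j))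
    (ip jp it jt : ℕ) (hip : 1 ≤ ip) (hit : 1 ≤ it) (htj : it ≤ jt)
    (hP : ∀ x, ip ≤ x → x ≤ jp → P x = P ip)
    (hT : ∀ y, it ≤ y → y ≤ jt → T y = T it)
    (x : ℕ) (hx1 : ip < x) (hx2 : x ≤ jp) :
    (x - ip ≤ jt - it →
      D x jt = D ip (jt - (x - ip)) + ((x - ip : ℕ) : ℝ≥0∞) * d (P ip) (T it)) ∧
    (jt - it < x - ip →
      D x jt = D (x - (jt - it)) it + ((jt - it : ℕ) : ℝ≥0∞) * d (P ip) (T it)) := by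
  have diagonal : ∀ a b m, ip ≤ a → a + m ≤ x → it ≤ b → b + m = jt →
      D (a + m) (b + m) = D a b + (m : ℝ≥0∞) * d (P ip) (T it) := by
    intro a b m ha hax hb hbj
    have hPa : P a = P ip := hP a ha (by omega)
    have hTb : T b = T it := hT b hb (by omega)
    rw [← hPa, ← hTb]
    exact dtw_add_add_of_runs d P T D hD0 hDi0 hrec (by omega) (by omega)
      (fun k hk ↦ by rw [hP _ (by omega) (by omega), hPa])
      (fun k hk ↦ by rw [hT _ (by omega) (by omega), hTb])
  constructor
  · intro hshort
    have h := diagonal ip (jt - (x - ip)) (x - ip) le_rfl (by omega) (by omega) (by omega)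
    rwa [Nat.add_sub_cancel' hx1.le, Nat.sub_add_cancel (by omega)] at h
  · intro hlong
    have h := diagonal (x - (jt - it)) it (jt - it) (by omega) (by omega) le_rfl (by omega)
    rwa [Nat.sub_add_cancel (by omega), Nat.add_sub_cancel' htj] at h

/-- rightmost-column values of a block of the DTW table. With
`w = j_t − i_t` and `c = d(P[i_p],T[i_t])`, for every `i_p < x ≤ j_p`:
`D[x,j_t] = D[i_p, j_t−(x−i_p)] + (x−i_p)·c` if `x−i_p ≤ w`, and
`D[x,j_t] = D[x−w, i_t] + w·c` otherwise. -/
theorem block_right_column {α : Type*} (d : α → α → ℝ≥0∞) (P T : ℕ → α)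
    (hrefl : ∀ a, d a a = 0) (hpos : ∀ a b, a ≠ b → 0 < d a b)
    (D : ℕ → ℕ → ℝ≥0∞)
    (hD0 : ∀ j, D 0 j = 0) (hDi0 : ∀ i, 1 ≤ i → D i 0 = ⊤)
    (hrec : ∀ i j, 1 ≤ i → 1 ≤ j →
      D i j = min (min (D (i - 1) (j - 1)) (D (i - 1) j)) (D i (j - 1))
        + d (P i) (T j))
    (ip jp it jt : ℕ) (hip : 1 ≤ ip) (hpj : ip ≤ jp) (hit : 1 ≤ it) (htj : it ≤ jt)
    (hP : ∀ x, ip ≤ x → x ≤ jp → P x = P ip)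
    (hT : ∀ y, it ≤ y → y ≤ jt → T y = T it)
    (x : ℕ) (hx1 : ip < x) (hx2 : x ≤ jp) :
    (x - ip ≤ jt - it →
      D x jt = D ip (jt - (x - ip)) + ((x - ip : ℕ) : ℝ≥0∞) * d (P ip) (T it)) ∧
    (jt - it < x - ip →
      D x jt = D (x - (jt - it)) it + ((jt - it : ℕ) : ℝ≥0∞) * d (P ip) (T it)) :=
  block_right_column_general d P T D hD0 hDi0 hrec ip jp it jt hip hit htj hP hT x hx1 hx2
end

section
/- For a block B = D[i_p..j_p, i_t..j_t] of the DTW table with height h = j_p − i_p and letter distance d = d(P[i_p],T[i_t]), the values in the bottom row of B satisfy: for every i_t < y ≤ j_t, D[j_p,y] = D[j_p−(y−i_t), i_t] + (y−i_t)·d if y−i_t ≤ h, and D[j_p,y] = D[i_p, y−h] + h·d otherwise. -/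
/-!
Inside a block the letter cost `c` is constant, and there the table is monotone along rows and
columns: `D[i,j] ≤ D[i,j+1]` whenever `T[j] = T[j+1]`, and `D[i,j] ≤ D[i+1,j]` whenever
`P[i] = P[i+1]`. Hence the minimum in the recurrence at an inner cell is attained by its diagonal
predecessor, `D[i+1,j+1] = D[i,j] + c`. Following the diagonal from `(j_p, y)` back to the left
or top border of the block gives the two formulas.
-/

open scoped ENNReal

section DTW

variable {α : Type*} {d : α → α → ℝ≥0∞} {P T : ℕ → α} {D : ℕ → ℕ → ℝ≥0∞}
  (hrec : ∀ i j, 1 ≤ i → 1 ≤ j →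
    D i j = min (min (D (i - 1) (j - 1)) (D (i - 1) j)) (D i (j - 1)) + d (P i) (T j))

include hrec

lemma dtw_rec_succ (i j : ℕ) :
    D (i + 1) (j + 1) =
      min (min (D i j) (D i (j + 1))) (D (i + 1) j) + d (P (i + 1)) (T (j + 1)) :=
  hrec (i + 1) (j + 1) (Nat.le_add_left 1 i) (Nat.le_add_left 1 j)

lemma dtw_le_up (i : ℕ) {j : ℕ} (hj : 1 ≤ j) : D (i + 1) j ≤ D i j + d (P (i + 1)) (T j) := by
  obtain ⟨j, rfl⟩ : ∃ j', j = j' + 1 := ⟨j - 1, by omega⟩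
  rw [dtw_rec_succ hrec]
  gcongr
  exact (min_le_left _ _).trans (min_le_right _ _)

lemma dtw_le_left {i : ℕ} (hi : 1 ≤ i) (j : ℕ) : D i (j + 1) ≤ D i j + d (P i) (T (j + 1)) := by
  obtain ⟨i, rfl⟩ : ∃ i', i = i' + 1 := ⟨i - 1, by omega⟩
  rw [dtw_rec_succ hrec]
  gcongr
  exact min_le_right _ _

lemma dtw_le_succ_right (hD0 : ∀ j, D 0 j = 0) {j : ℕ} (hj : 1 ≤ j) (hT : T (j + 1) = T j) :
    ∀ i, D i j ≤ D i (j + 1)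
  | 0 => by rw [hD0, hD0]
  | i + 1 => by
    have hup := dtw_le_up hrec i hj
    have ih := dtw_le_succ_right hD0 hj hT i
    rw [dtw_rec_succ hrec, hT]
    simp only [← min_add_add_right, le_min_iff]
    exact ⟨⟨hup, hup.trans (by gcongr)⟩, le_self_add⟩

lemma dtw_le_succ_down (hDi0 : ∀ i, 1 ≤ i → D i 0 = ⊤) {i : ℕ} (hi : 1 ≤ i)
    (hP : P (i + 1) = P i) : ∀ j, D i j ≤ D (i + 1) j
  | 0 => by rw [hDi0 i hi, hDi0 (i + 1) (by omega)]
  | j + 1 => by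
    have hleft := dtw_le_left hrec hi j
    have ih := dtw_le_succ_down hDi0 hi hP j
    rw [dtw_rec_succ hrec, hP]
    simp only [← min_add_add_right, le_min_iff]
    exact ⟨⟨hleft, le_self_add⟩, hleft.trans (by gcongr)⟩

lemma dtw_diag_step (hD0 : ∀ j, D 0 j = 0) (hDi0 : ∀ i, 1 ≤ i → D i 0 = ⊤) {i j : ℕ}
    (hi : 1 ≤ i) (hj : 1 ≤ j) (hP : P (i + 1) = P i) (hT : T (j + 1) = T j) :
    D (i + 1) (j + 1) = D i j + d (P i) (T j) := by
  rw [dtw_rec_succ hrec, hP, hT, min_eq_left (dtw_le_succ_right hrec hD0 hj hT i),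
    min_eq_left (dtw_le_succ_down hrec hDi0 hi hP j)]

lemma dtw_add_diag (hD0 : ∀ j, D 0 j = 0) (hDi0 : ∀ i, 1 ≤ i → D i 0 = ⊤) {i j : ℕ}
    (hi : 1 ≤ i) (hj : 1 ≤ j) {a b : α} :
    ∀ k, (∀ x, i ≤ x → x ≤ i + k → P x = a) → (∀ y, j ≤ y → y ≤ j + k → T y = b) →
      D (i + k) (j + k) = D i j + (k : ℝ≥0∞) * d a b
  | 0, _, _ => by simp
  | k + 1, hP, hT => by
    have ih := dtw_add_diag hD0 hDi0 hi hj k (fun x h₁ h₂ ↦ hP x h₁ (by omega))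
      (fun y h₁ h₂ ↦ hT y h₁ (by omega))
    have hPk : P (i + k) = a := hP _ (by omega) (by omega)
    have hTk : T (j + k) = b := hT _ (by omega) (by omega)
    rw [← add_assoc, ← add_assoc,
      dtw_diag_step hrec hD0 hDi0 (i := i + k) (j := j + k) (by omega) (by omega)
      ((hP _ (by omega) le_rfl).trans hPk.symm) ((hT _ (by omega) le_rfl).trans hTk.symm),
      ih, hPk, hTk]
    push_cast
    ring

end DTW

theorem block_bottom_row_general {α : Type*} (d : α → α → ℝ≥0∞) (P T : ℕ → α)
    (D : ℕ → ℕ → ℝ≥0∞)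
    (hD0 : ∀ j, D 0 j = 0) (hDi0 : ∀ i, 1 ≤ i → D i 0 = ⊤)
    (hrec : ∀ i j, 1 ≤ i → 1 ≤ j →
      D i j = min (min (D (i - 1) (j - 1)) (D (i - 1) j)) (D i (j - 1))
        + d (P i) (T j))
    (ip jp it jt : ℕ) (hip : 1 ≤ ip) (hpj : ip ≤ jp) (hit : 1 ≤ it)
    (hP : ∀ x, ip ≤ x → x ≤ jp → P x = P ip)
    (hT : ∀ y, it ≤ y → y ≤ jt → T y = T it)
    (y : ℕ) (hy1 : it < y) (hy2 : y ≤ jt) :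
    (y - it ≤ jp - ip →
      D jp y = D (jp - (y - it)) it + ((y - it : ℕ) : ℝ≥0∞) * d (P ip) (T it)) ∧
    (jp - ip < y - it →
      D jp y = D ip (y - (jp - ip)) + ((jp - ip : ℕ) : ℝ≥0∞) * d (P ip) (T it)) := by
  constructor
  · intro h
    have hdiag := dtw_add_diag hrec hD0 hDi0 (i := jp - (y - it)) (by omega) hit (y - it)
      (fun x h₁ h₂ ↦ hP x (by omega) (by omega)) (fun y' h₁ h₂ ↦ hT y' h₁ (by omega))
    rwa [Nat.sub_add_cancel (by omega), Nat.add_sub_cancel' hy1.le] at hdiag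
  · intro h
    have hdiag := dtw_add_diag hrec hD0 hDi0 hip (j := y - (jp - ip)) (by omega) (jp - ip)
      (fun x h₁ h₂ ↦ hP x h₁ (by omega)) (fun y' h₁ h₂ ↦ hT y' (by omega) (by omega))
    rwa [Nat.add_sub_cancel' hpj, Nat.sub_add_cancel (by omega)] at hdiag

/-- bottom-row values of a block of the DTW table. With
`h = j_p − i_p` and `c = d(P[i_p],T[i_t])`, for every `i_t < y ≤ j_t`:
`D[j_p,y] = D[j_p−(y−i_t), i_t] + (y−i_t)·c` if `y−i_t ≤ h`, and
`D[j_p,y] = D[i_p, y−h] + h·c` otherwise. -/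
theorem block_bottom_row {α : Type*} (d : α → α → ℝ≥0∞) (P T : ℕ → α)
    (hrefl : ∀ a, d a a = 0) (hpos : ∀ a b, a ≠ b → 0 < d a b)
    (D : ℕ → ℕ → ℝ≥0∞)
    (hD0 : ∀ j, D 0 j = 0) (hDi0 : ∀ i, 1 ≤ i → D i 0 = ⊤)
    (hrec : ∀ i j, 1 ≤ i → 1 ≤ j →
      D i j = min (min (D (i - 1) (j - 1)) (D (i - 1) j)) (D i (j - 1))
        + d (P i) (T j))
    (ip jp it jt : ℕ) (hip : 1 ≤ ip) (hpj : ip ≤ jp) (hit : 1 ≤ it) (htj : it ≤ jt)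
    (hP : ∀ x, ip ≤ x → x ≤ jp → P x = P ip)
    (hT : ∀ y, it ≤ y → y ≤ jt → T y = T it)
    (y : ℕ) (hy1 : it < y) (hy2 : y ≤ jt) :
    (y - it ≤ jp - ip →
      D jp y = D (jp - (y - it)) it + ((y - it : ℕ) : ℝ≥0∞) * d (P ip) (T it)) ∧
    (jp - ip < y - it →
      D jp y = D ip (y - (jp - ip)) + ((jp - ip : ℕ) : ℝ≥0∞) * d (P ip) (T it)) :=
  block_bottom_row_general d P T D hD0 hDi0 hrec ip jp it jt hip hpj hit hP hT y hy1 hy2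
end

section
/- Inside a block of the DTW table, the value of any cell (x,j_t) in the rightmost column is at most the value at the top-left entry of its antidiagonal within the block plus the diagonal steps: if x−i_p ≤ w then D[x,j_t] ≤ D[i_p, j_t−(x−i_p)] + (x−i_p)·d, and if x−i_p > w then D[x,j_t] ≤ D[x−w, i_t] + w·d, where w = j_t−i_t and d is the constant letter distance in the block. -/
open scoped ENNReal

/-- easy direction of the border lemma: in a block with width
`w = j_t − i_t` and constant letter distance `c`, each rightmost-column value is at
most the value at the top-left entry of its antidiagonal within the block plus the
cost of the diagonal (or horizontal) steps. -/
theorem block_right_column_le {α : Type*} (d : α → α → ℝ≥0∞) (P T : ℕ → α)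
    (hrefl : ∀ a, d a a = 0) (hpos : ∀ a b, a ≠ b → 0 < d a b)
    (D : ℕ → ℕ → ℝ≥0∞)
    (hD0 : ∀ j, D 0 j = 0) (hDi0 : ∀ i, 1 ≤ i → D i 0 = ⊤)
    (hrec : ∀ i j, 1 ≤ i → 1 ≤ j →
      D i j = min (min (D (i - 1) (j - 1)) (D (i - 1) j)) (D i (j - 1))
        + d (P i) (T j))
    (ip jp it jt : ℕ) (hip : 1 ≤ ip) (hpj : ip ≤ jp) (hit : 1 ≤ it) (htj : it ≤ jt)
    (hP : ∀ x, ip ≤ x → x ≤ jp → P x = P ip)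
    (hT : ∀ y, it ≤ y → y ≤ jt → T y = T it)
    (x : ℕ) (hx1 : ip < x) (hx2 : x ≤ jp) :
    (x - ip ≤ jt - it →
      D x jt ≤ D ip (jt - (x - ip)) + ((x - ip : ℕ) : ℝ≥0∞) * d (P ip) (T it)) ∧
    (jt - it < x - ip →
      D x jt ≤ D (x - (jt - it)) it + ((jt - it : ℕ) : ℝ≥0∞) * d (P ip) (T it)) := by
  set c := d (P ip) (T it) with hc
  have key : ∀ k i j, ip ≤ i → it ≤ j → i + k ≤ jp → j + k ≤ jt →
      D (i + k) (j + k) ≤ D i j + (k : ℝ≥0∞) * c := by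
    intro k
    induction k with
    | zero => intro i j _ _ _ _; simp
    | succ k ih =>
      intro i j hi hj hijp hjjt
      have h1 : D (i + k) (j + k) ≤ D i j + (k : ℝ≥0∞) * c :=
        ih i j hi hj (by omega) (by omega)
      have hi1 : 1 ≤ i + (k + 1) := by omega
      have hj1 : 1 ≤ j + (k + 1) := by omega
      have hdval : d (P (i + (k + 1))) (T (j + (k + 1))) = c := by
        rw [hP _ (by omega) (by omega), hT _ (by omega) (by omega)]
      have := hrec (i + (k + 1)) (j + (k + 1)) hi1 hj1
      have hsub1 : i + (k + 1) - 1 = i + k := by omega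
      have hsub2 : j + (k + 1) - 1 = j + k := by omega
      rw [hsub1, hsub2, hdval] at this
      calc D (i + (k + 1)) (j + (k + 1))
          = min (min (D (i + k) (j + k)) (D (i + k) (j + (k + 1)))) (D (i + (k + 1)) (j + k)) + c := this
        _ ≤ D (i + k) (j + k) + c := by
            gcongr
            exact le_trans (min_le_left _ _) (min_le_left _ _)
        _ ≤ D i j + (k : ℝ≥0∞) * c + c := by gcongr
        _ = D i j + ((k + 1 : ℕ) : ℝ≥0∞) * c := by
            push_cast; ring
  constructor
  · intro hle
    have hx : x = ip + (x - ip) := by omega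
    have hjt : jt = (jt - (x - ip)) + (x - ip) := by omega
    calc D x jt = D (ip + (x - ip)) ((jt - (x - ip)) + (x - ip)) := by
          rw [← hx, ← hjt]
      _ ≤ D ip (jt - (x - ip)) + ((x - ip : ℕ) : ℝ≥0∞) * c :=
          key (x - ip) ip (jt - (x - ip)) le_rfl (by omega) (by omega) (by omega)
  · intro hlt
    have hx : x = (x - (jt - it)) + (jt - it) := by omega
    have hjt : jt = it + (jt - it) := by omega
    calc D x jt = D ((x - (jt - it)) + (jt - it)) (it + (jt - it)) := by
          rw [← hx, ← hjt]
      _ ≤ D (x - (jt - it)) it + ((jt - it : ℕ) : ℝ≥0∞) * c :=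
          key (jt - it) (x - (jt - it)) it (by omega) le_rfl (by omega) (by omega)
end

section
/- If D[i,j] = 0 in the DTW table (with i ≥ 1), then every cell on any cost-realizing path from row 0 to (i,j) satisfies P[i'] = T[j']; in particular, each zero-valued cell with i ≥ 1 lies in a homogeneous block, and any maximal diagonal chain of homogeneous blocks containing zero values reaches the first row of D. -/
open scoped ENNReal

def isStep (p q : ℕ × ℕ) : Prop :=
  (q.1 = p.1 + 1 ∧ q.2 = p.2) ∨ (q.1 = p.1 ∧ q.2 = p.2 + 1) ∨
    (q.1 = p.1 + 1 ∧ q.2 = p.2 + 1)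

/-- A monotone staircase path in the DTW table starting at some cell `(1, j₀)` of the
first row and ending at `(i, j)`. -/
def IsTablePath (i j : ℕ) (π : List (ℕ × ℕ)) : Prop :=
  π ≠ [] ∧ (∃ j0, 1 ≤ j0 ∧ π.head? = some (1, j0)) ∧
    π.getLast? = some (i, j) ∧ π.Chain' isStep

/- Distinct letters are at distance at least `1`, so a sum of letter distances vanishes only
if every summand pairs equal letters. Likewise `D[i,j] = 0` forces `P i = T j` together with a
zero-valued predecessor in the recurrence; that predecessor is never in column `0`, where
`D = ∞`, so following predecessors back to row `1` yields a path of matching zero cells. -/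

theorem IsTablePath.singleton {j : ℕ} (hj : 1 ≤ j) : IsTablePath 1 j [(1, j)] :=
  ⟨List.cons_ne_nil _ _, ⟨j, hj, rfl⟩, rfl, List.isChain_singleton _⟩

theorem IsTablePath.append_step {i j i' j' : ℕ} {π : List (ℕ × ℕ)}
    (hπ : IsTablePath i' j' π) (hstep : isStep (i', j') (i, j)) :
    IsTablePath i j (π ++ [(i, j)]) := by
  obtain ⟨hne, ⟨j0, hj0, hhead⟩, hlast, hchain⟩ := hπ
  refine ⟨by simp, ⟨j0, hj0, by rwa [List.head?_append_of_ne_nil _ hne]⟩, by simp, ?_⟩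
  refine hchain.append (List.isChain_singleton _) ?_
  simp [hlast, hstep]

namespace DTW

variable {α : Type*} {d : α → α → ℝ≥0∞} {P T : ℕ → α} {D : ℕ → ℕ → ℝ≥0∞}

theorem eq_of_dist_eq_zero (hd1 : ∀ a b, a ≠ b → 1 ≤ d a b) {a b : α} (h : d a b = 0) :
    a = b := by
  by_contra hne
  simpa [h] using hd1 a b hne

theorem one_le_col_of_table_eq_zero (hDi0 : ∀ i, 1 ≤ i → D i 0 = ⊤) {i j : ℕ} (hi : 1 ≤ i)
    (hz : D i j = 0) : 1 ≤ j := by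
  rcases Nat.eq_zero_or_pos j with rfl | hj
  · simp [hDi0 i hi] at hz
  · exact hj

theorem dist_eq_zero_and_exists_pred_of_table_eq_zero
    (hrec : ∀ i j, 1 ≤ i → 1 ≤ j →
      D i j = min (min (D (i - 1) (j - 1)) (D (i - 1) j)) (D i (j - 1)) + d (P i) (T j))
    {i j : ℕ} (hi : 1 ≤ i) (hj : 1 ≤ j) (hz : D i j = 0) :
    d (P i) (T j) = 0 ∧ ∃ q : ℕ × ℕ, isStep q (i, j) ∧ D q.1 q.2 = 0 := by
  rw [hrec i j hi hj, add_eq_zero] at hz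
  obtain ⟨hmin, hdist⟩ := hz
  refine ⟨hdist, ?_⟩
  simp only [← bot_eq_zero, min_eq_bot, or_assoc] at hmin
  rcases hmin with h | h | h
  · exact ⟨(i - 1, j - 1), Or.inr (Or.inr ⟨by omega, by omega⟩), h⟩
  · exact ⟨(i - 1, j), Or.inl ⟨by omega, rfl⟩, h⟩
  · exact ⟨(i, j - 1), Or.inr (Or.inl ⟨rfl, by omega⟩), h⟩

theorem eq_of_table_eq_zero (hd1 : ∀ a b, a ≠ b → 1 ≤ d a b)
    (hDi0 : ∀ i, 1 ≤ i → D i 0 = ⊤)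
    (hrec : ∀ i j, 1 ≤ i → 1 ≤ j →
      D i j = min (min (D (i - 1) (j - 1)) (D (i - 1) j)) (D i (j - 1)) + d (P i) (T j))
    {i j : ℕ} (hi : 1 ≤ i) (hz : D i j = 0) : P i = T j :=
  eq_of_dist_eq_zero hd1 (dist_eq_zero_and_exists_pred_of_table_eq_zero hrec hi
    (one_le_col_of_table_eq_zero hDi0 hi hz) hz).1

theorem forall_mem_eq_of_sum_dist_eq_zero (hd1 : ∀ a b, a ≠ b → 1 ≤ d a b)
    {π : List (ℕ × ℕ)} (hsum : (π.map (fun p => d (P p.1) (T p.2))).sum = 0) :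
    ∀ p ∈ π, P p.1 = T p.2 := fun _ hp =>
  eq_of_dist_eq_zero hd1 (List.sum_eq_zero_iff.mp hsum _ (List.mem_map_of_mem hp))

theorem exists_tablePath_of_table_eq_zero (hd1 : ∀ a b, a ≠ b → 1 ≤ d a b)
    (hDi0 : ∀ i, 1 ≤ i → D i 0 = ⊤)
    (hrec : ∀ i j, 1 ≤ i → 1 ≤ j →
      D i j = min (min (D (i - 1) (j - 1)) (D (i - 1) j)) (D i (j - 1)) + d (P i) (T j))
    {i j : ℕ} (hi : 1 ≤ i) (hz : D i j = 0) :
    ∃ π, IsTablePath i j π ∧ ∀ p ∈ π, P p.1 = T p.2 ∧ D p.1 p.2 = 0 := by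
  induction hn : i + j using Nat.strong_induction_on generalizing i j with
  | _ n ih =>
    have hj := one_le_col_of_table_eq_zero hDi0 hi hz
    have hmatch := eq_of_table_eq_zero hd1 hDi0 hrec hi hz
    obtain ⟨-, ⟨i', j'⟩, hstep, hz'⟩ := dist_eq_zero_and_exists_pred_of_table_eq_zero hrec hi hj hz
    rcases Nat.eq_zero_or_pos i' with rfl | hi'
    · have hi1 : i = 1 := by unfold isStep at hstep; omega
      subst hi1
      refine ⟨[(1, j)], IsTablePath.singleton hj, ?_⟩
      simp [hmatch, hz]
    · obtain ⟨π, hπ, hall⟩ := ih (i' + j') (by unfold isStep at hstep; omega) hi' hz' rfl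
      refine ⟨π ++ [(i, j)], hπ.append_step hstep, ?_⟩
      simp only [List.mem_append, List.mem_singleton]
      rintro p (hp | rfl)
      · exact hall p hp
      · exact ⟨hmatch, hz⟩

end DTW

theorem zero_cell_structure_general {α : Type*} (d : α → α → ℝ≥0∞) (P T : ℕ → α)
    (hd1 : ∀ a b, a ≠ b → 1 ≤ d a b)
    (D : ℕ → ℕ → ℝ≥0∞)
    (hDi0 : ∀ i, 1 ≤ i → D i 0 = ⊤)
    (hrec : ∀ i j, 1 ≤ i → 1 ≤ j →
      D i j = min (min (D (i - 1) (j - 1)) (D (i - 1) j)) (D i (j - 1))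
        + d (P i) (T j))
    (i j : ℕ) (hi : 1 ≤ i) (hzero : D i j = 0) :
    (∀ π, IsTablePath i j π →
        D i j = (π.map (fun p => d (P p.1) (T p.2))).sum →
        ∀ p ∈ π, P p.1 = T p.2) ∧
    P i = T j ∧
    (∃ π, IsTablePath i j π ∧ ∀ p ∈ π, P p.1 = T p.2 ∧ D p.1 p.2 = 0) :=
  ⟨fun _ _ hsum => DTW.forall_mem_eq_of_sum_dist_eq_zero hd1 (hsum.symm.trans hzero),
    DTW.eq_of_table_eq_zero hd1 hDi0 hrec hi hzero,
    DTW.exists_tablePath_of_table_eq_zero hd1 hDi0 hrec hi hzero⟩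

/-- with integer letter distances, if `D[i,j] = 0` (`i ≥ 1`), then every
cell of any cost-realizing path to `(i,j)` matches (`P[i'] = T[j']`); in particular
`(i,j)` lies in a homogeneous block (`P[i] = T[j]`), and there is a chain of matching
zero-valued cells (a 0-streak) reaching the first row of `D`. -/
theorem zero_cell_structure {α : Type*} (d : α → α → ℝ≥0∞) (P T : ℕ → α)
    (hint : ∀ a b, ∃ n : ℕ, d a b = n)
    (hrefl : ∀ a, d a a = 0) (hd1 : ∀ a b, a ≠ b → 1 ≤ d a b)
    (D : ℕ → ℕ → ℝ≥0∞)
    (hD0 : ∀ j, D 0 j = 0) (hDi0 : ∀ i, 1 ≤ i → D i 0 = ⊤)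
    (hrec : ∀ i j, 1 ≤ i → 1 ≤ j →
      D i j = min (min (D (i - 1) (j - 1)) (D (i - 1) j)) (D i (j - 1))
        + d (P i) (T j))
    (i j : ℕ) (hi : 1 ≤ i) (hj : 1 ≤ j) (hzero : D i j = 0) :
    (∀ π, IsTablePath i j π →
        D i j = (π.map (fun p => d (P p.1) (T p.2))).sum →
        ∀ p ∈ π, P p.1 = T p.2) ∧
    P i = T j ∧
    (∃ π, IsTablePath i j π ∧ ∀ p ∈ π, P p.1 = T p.2 ∧ D p.1 p.2 = 0) :=
  zero_cell_structure_general d P T hd1 D hDi0 hrec i j hi hzero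
end

section
/- If D[i,j] = 1 in the DTW table with integer letter distances, then either P[i] = T[j] (so (i,j) lies in a homogeneous block all of whose values equal 1), or P[i] ≠ T[j] and there exists a cost-realizing path to (i,j) whose every cell except (i,j) has value 0 and satisfies P[i'] = T[j']. -/
/-!
Inside a rectangle where `P` and `T` are constant with matching letters every local cost
vanishes, so `D` can only decrease to the right and downwards. Conversely, replacing a cell
`(x, y)` by `(min x a, min y b)` with `(a, b)` in the rectangle changes none of the letters
read, so the recurrence shows `D (min x a) (min y b) ≤ D x y`: `D` can only decrease to the
left and upwards as well. Hence `D` is constant on the rectangle.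

If `P i ≠ T j`, the last cell alone costs at least `1 = D i j`, so an optimal path reaches
`(i, j)` through cells of value `0`, and a cell of value `0` is a matching cell.
-/

open scoped ENNReal

structure IsDTWTable {α : Type*} (d : α → α → ℝ≥0∞) (P T : ℕ → α) (D : ℕ → ℕ → ℝ≥0∞) :
    Prop where
  zero_row : ∀ j, D 0 j = 0
  zero_col : ∀ i, 1 ≤ i → D i 0 = ⊤
  eq_min_add : ∀ i j, 1 ≤ i → 1 ≤ j →
    D i j = min (min (D (i - 1) (j - 1)) (D (i - 1) j)) (D i (j - 1)) + d (P i) (T j)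

theorem isStep_min_or_eq {q : ℕ × ℕ} {x y : ℕ} (h : isStep q (x, y)) (a b : ℕ) :
    isStep (min q.1 a, min q.2 b) (min x a, min y b) ∨
      (min q.1 a = min x a ∧ min q.2 b = min y b) := by
  obtain ⟨q₁, q₂⟩ := q
  simp only [isStep] at h ⊢
  omega

theorem comp_min_eq_of_forall_eq {β : Type*} {f : ℕ → β} {c : β} {lo hi a x : ℕ}
    (hf : ∀ y, lo ≤ y → y ≤ hi → f y = c) (ha : lo ≤ a) (hx : x ≤ hi) :
    f (min x a) = f x := by
  rcases le_total x a with h | h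
  · rw [min_eq_left h]
  · rw [min_eq_right h, hf a ha (h.trans hx), hf x (ha.trans h) hx]

namespace IsTablePath

theorem singleton_s8 {b : ℕ} (hb : 1 ≤ b) : IsTablePath 1 b [(1, b)] :=
  ⟨List.cons_ne_nil _ _, ⟨b, hb, rfl⟩, rfl, List.isChain_singleton _⟩

theorem concat {x y a b : ℕ} {π : List (ℕ × ℕ)} (h : IsTablePath x y π)
    (hs : isStep (x, y) (a, b)) : IsTablePath a b (π ++ [(a, b)]) := by
  obtain ⟨hne, ⟨j₀, hj₀, hhead⟩, hlast, hchain⟩ := h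
  refine ⟨by simp, ⟨j₀, hj₀, by rw [List.head?_append, hhead]; rfl⟩, List.getLast?_concat, ?_⟩
  refine List.IsChain.append hchain (List.isChain_singleton _) ?_
  rw [hlast]
  simpa using hs

theorem one_le_of_mem {a b : ℕ} {π : List (ℕ × ℕ)} (h : IsTablePath a b π) {p : ℕ × ℕ}
    (hp : p ∈ π) : 1 ≤ p.1 ∧ 1 ≤ p.2 := by
  obtain ⟨_, ⟨j₀, hj₀, hhead⟩, _, hchain⟩ := h
  refine List.IsChain.induction (fun p : ℕ × ℕ => 1 ≤ p.1 ∧ 1 ≤ p.2) π hchain ?_ ?_ p hp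
  · rintro ⟨x₁, x₂⟩ ⟨y₁, y₂⟩ hxy hx
    simp only [isStep] at hxy hx ⊢
    omega
  · intro hne
    rw [List.head?_eq_some_head hne, Option.some_inj] at hhead
    rw [hhead]
    exact ⟨le_rfl, hj₀⟩

end IsTablePath

namespace IsDTWTable

variable {α : Type*} {d : α → α → ℝ≥0∞} {P T : ℕ → α} {D : ℕ → ℕ → ℝ≥0∞}

theorem dist_le (hD : IsDTWTable d P T D) {a b : ℕ} (ha : 1 ≤ a) (hb : 1 ≤ b) :
    d (P a) (T b) ≤ D a b := by
  rw [hD.eq_min_add a b ha hb]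
  exact le_add_self

theorem le_add_of_isStep (hD : IsDTWTable d P T D) {q : ℕ × ℕ} {a b : ℕ}
    (hq : isStep q (a, b)) (ha : 1 ≤ a) (hb : 1 ≤ b) :
    D a b ≤ D q.1 q.2 + d (P a) (T b) := by
  rw [hD.eq_min_add a b ha hb]
  gcongr ?_ + _
  obtain ⟨q₁, q₂⟩ := q
  dsimp only [isStep] at hq
  rcases hq with ⟨rfl, rfl⟩ | ⟨rfl, rfl⟩ | ⟨rfl, rfl⟩ <;> simp

theorem exists_isStep_eq_add (hD : IsDTWTable d P T D) {a b : ℕ} (ha : 1 ≤ a) (hb : 1 ≤ b) :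
    ∃ q, isStep q (a, b) ∧ D a b = D q.1 q.2 + d (P a) (T b) := by
  rw [hD.eq_min_add a b ha hb]
  rcases min_choice (min (D (a - 1) (b - 1)) (D (a - 1) b)) (D a (b - 1)) with h | h <;>
    rw [h]
  · rcases min_choice (D (a - 1) (b - 1)) (D (a - 1) b) with h' | h' <;> rw [h']
    · exact ⟨(a - 1, b - 1), by dsimp only [isStep]; omega, rfl⟩
    · exact ⟨(a - 1, b), by dsimp only [isStep]; omega, rfl⟩
  · exact ⟨(a, b - 1), by dsimp only [isStep]; omega, rfl⟩

theorem eq_of_eq_zero (hD : IsDTWTable d P T D) (hd1 : ∀ a b, a ≠ b → 1 ≤ d a b)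
    {x y : ℕ} (hx : 1 ≤ x) (hy : 1 ≤ y) (h0 : D x y = 0) : P x = T y := by
  by_contra hne
  have := (hd1 _ _ hne).trans (h0 ▸ hD.dist_le hx hy)
  simp at this

theorem le_of_dist_eq_zero (hD : IsDTWTable d P T D) {a₀ b₀ a b : ℕ} (ha₀ : 1 ≤ a₀)
    (hb₀ : 1 ≤ b₀) (ha : a₀ ≤ a) (hb : b₀ ≤ b)
    (hz : ∀ x y, a₀ ≤ x → x ≤ a → b₀ ≤ y → y ≤ b → d (P x) (T y) = 0) :
    D a b ≤ D a₀ b₀ := by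
  induction hn : a + b using Nat.strong_induction_on generalizing a b with
  | _ n ih =>
  by_cases ha' : a₀ < a
  · calc D a b ≤ D (a - 1) b + d (P a) (T b) :=
          hD.le_add_of_isStep (q := (a - 1, b)) (by dsimp only [isStep]; omega) (by omega)
            (by omega)
      _ = D (a - 1) b := by rw [hz a b ha'.le le_rfl hb le_rfl, add_zero]
      _ ≤ D a₀ b₀ := ih (a - 1 + b) (by omega) (by omega) hb
          (fun x y h₁ h₂ h₃ h₄ => hz x y h₁ (by omega) h₃ h₄) rfl
  by_cases hb' : b₀ < b
  · calc D a b ≤ D a (b - 1) + d (P a) (T b) :=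
          hD.le_add_of_isStep (q := (a, b - 1)) (by dsimp only [isStep]; omega) (by omega)
            (by omega)
      _ = D a (b - 1) := by rw [hz a b ha le_rfl hb'.le le_rfl, add_zero]
      _ ≤ D a₀ b₀ := ih (a + (b - 1)) (by omega) ha (by omega)
          (fun x y h₁ h₂ h₃ h₄ => hz x y h₁ h₂ h₃ (by omega)) rfl
  obtain rfl : a = a₀ := by omega
  obtain rfl : b = b₀ := by omega
  exact le_rfl

theorem clamp_le (hD : IsDTWTable d P T D) {ip jp it jt a b : ℕ} {p t : α}
    (hP : ∀ x, ip ≤ x → x ≤ jp → P x = p) (hT : ∀ y, it ≤ y → y ≤ jt → T y = t)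
    (ha : ip ≤ a) (hb : it ≤ b) (ha₁ : 1 ≤ a) (hb₁ : 1 ≤ b) {x y : ℕ} (hx : x ≤ jp)
    (hy : y ≤ jt) : D (min x a) (min y b) ≤ D x y := by
  induction hn : x + y using Nat.strong_induction_on generalizing x y with
  | _ n ih =>
  rcases Nat.eq_zero_or_pos x with rfl | hx₁
  · simp [hD.zero_row]
  rcases Nat.eq_zero_or_pos y with rfl | hy₁
  · simp [hD.zero_col x hx₁]
  obtain ⟨⟨q₁, q₂⟩, hq, hDxy⟩ := hD.exists_isStep_eq_add hx₁ hy₁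
  have hq' : q₁ ≤ x ∧ q₂ ≤ y ∧ q₁ + q₂ < x + y := by
    simp only [isStep] at hq
    omega
  calc D (min x a) (min y b) ≤ D (min q₁ a) (min q₂ b) + d (P (min x a)) (T (min y b)) := by
        rcases isStep_min_or_eq hq a b with h | ⟨h₁, h₂⟩
        · exact hD.le_add_of_isStep h (by omega) (by omega)
        · rw [h₁, h₂]
          exact le_self_add
    _ = D (min q₁ a) (min q₂ b) + d (P x) (T y) := by
        rw [comp_min_eq_of_forall_eq hP ha hx, comp_min_eq_of_forall_eq hT hb hy]
    _ ≤ D q₁ q₂ + d (P x) (T y) := by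
        gcongr
        exact ih _ (by omega) (by omega) (by omega) rfl
    _ = D x y := hDxy.symm

theorem le_of_mem_block (hD : IsDTWTable d P T D) {ip jp it jt : ℕ} {p t : α}
    (hip : 1 ≤ ip) (hit : 1 ≤ it) (hP : ∀ x, ip ≤ x → x ≤ jp → P x = p)
    (hT : ∀ y, it ≤ y → y ≤ jt → T y = t) (hpt : d p t = 0) {a b a' b' : ℕ}
    (ha : ip ≤ a) (ha' : a ≤ jp) (hb : it ≤ b) (hb' : b ≤ jt)
    (ha₂ : ip ≤ a') (ha₂' : a' ≤ jp) (hb₂ : it ≤ b') (hb₂' : b' ≤ jt) :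
    D a b ≤ D a' b' :=
  calc D a b ≤ D (min a a') (min b b') :=
        hD.le_of_dist_eq_zero (by omega) (by omega) (min_le_left _ _) (min_le_left _ _)
          fun x y h₁ h₂ h₃ h₄ => by rw [hP x (by omega) (by omega), hT y (by omega) (by omega), hpt]
    _ = D (min a' (min a a')) (min b' (min b b')) := by congr 1 <;> omega
    _ ≤ D a' b' := hD.clamp_le hP hT (by omega) (by omega) (by omega) (by omega) ha₂' hb₂'

theorem eq_of_mem_block (hD : IsDTWTable d P T D) {ip jp it jt : ℕ} {p t : α}
    (hip : 1 ≤ ip) (hit : 1 ≤ it) (hP : ∀ x, ip ≤ x → x ≤ jp → P x = p)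
    (hT : ∀ y, it ≤ y → y ≤ jt → T y = t) (hpt : d p t = 0) {a b a' b' : ℕ}
    (ha : ip ≤ a) (ha' : a ≤ jp) (hb : it ≤ b) (hb' : b ≤ jt)
    (ha₂ : ip ≤ a') (ha₂' : a' ≤ jp) (hb₂ : it ≤ b') (hb₂' : b' ≤ jt) :
    D a b = D a' b' :=
  le_antisymm (hD.le_of_mem_block hip hit hP hT hpt ha ha' hb hb' ha₂ ha₂' hb₂ hb₂')
    (hD.le_of_mem_block hip hit hP hT hpt ha₂ ha₂' hb₂ hb₂' ha ha' hb hb')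

theorem exists_isTablePath (hD : IsDTWTable d P T D) {a b : ℕ} (ha : 1 ≤ a) (hb : 1 ≤ b)
    (hfin : D a b ≠ ⊤) :
    ∃ π, IsTablePath a b π ∧ (π.map fun p => d (P p.1) (T p.2)).sum = D a b ∧
      ∀ p ∈ π, p ≠ (a, b) → D p.1 p.2 + d (P a) (T b) ≤ D a b := by
  induction hn : a + b using Nat.strong_induction_on generalizing a b with
  | _ n ih =>
  obtain ⟨⟨x, y⟩, hq, hDab⟩ := hD.exists_isStep_eq_add ha hb
  rcases Nat.eq_zero_or_pos x with rfl | hx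
  · obtain rfl : a = 1 := by
      simp only [isStep] at hq
      omega
    refine ⟨[(1, b)], IsTablePath.singleton_s8 hb, by simp [hDab, hD.zero_row], ?_⟩
    simp
  have hy : 1 ≤ y := by
    rcases Nat.eq_zero_or_pos y with rfl | hy
    · simp [hDab, hD.zero_col x hx] at hfin
    · exact hy
  obtain ⟨π, hπ, hcost, hle⟩ := ih (x + y) (by simp only [isStep] at hq; omega) hx hy
    (ne_top_of_le_ne_top hfin (hDab ▸ le_self_add)) rfl
  refine ⟨π ++ [(a, b)], hπ.concat hq, by simp [hcost, hDab], fun p hp hne => ?_⟩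
  have hpq : D p.1 p.2 ≤ D x y := by
    rcases List.mem_append.1 hp with hp | hp
    · by_cases hpxy : p = (x, y)
      · rw [hpxy]
      · exact le_self_add.trans (hle p hp hpxy)
    · exact absurd (List.mem_singleton.1 hp) hne
  rw [hDab]
  gcongr

end IsDTWTable

theorem one_cell_structure_general {α : Type*} (d : α → α → ℝ≥0∞) (P T : ℕ → α)
    (hrefl : ∀ a, d a a = 0) (hd1 : ∀ a b, a ≠ b → 1 ≤ d a b)
    (D : ℕ → ℕ → ℝ≥0∞)
    (hD0 : ∀ j, D 0 j = 0) (hDi0 : ∀ i, 1 ≤ i → D i 0 = ⊤)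
    (hrec : ∀ i j, 1 ≤ i → 1 ≤ j →
      D i j = min (min (D (i - 1) (j - 1)) (D (i - 1) j)) (D i (j - 1))
        + d (P i) (T j))
    (i j : ℕ) (hi : 1 ≤ i) (hj : 1 ≤ j) (hone : D i j = 1) :
    (P i = T j ∧
      ∀ ip jp it jt, 1 ≤ ip → ip ≤ i → i ≤ jp → 1 ≤ it → it ≤ j → j ≤ jt →
        (∀ x, ip ≤ x → x ≤ jp → P x = P i) → (∀ y, it ≤ y → y ≤ jt → T y = T j) →
        ∀ a b, ip ≤ a → a ≤ jp → it ≤ b → b ≤ jt → D a b = 1) ∨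
    (P i ≠ T j ∧
      ∃ π, IsTablePath i j π ∧
        D i j = (π.map (fun p => d (P p.1) (T p.2))).sum ∧
        ∀ p ∈ π, p ≠ (i, j) → D p.1 p.2 = 0 ∧ P p.1 = T p.2) := by
  have hD : IsDTWTable d P T D := ⟨hD0, hDi0, hrec⟩
  by_cases hm : P i = T j
  · refine Or.inl ⟨hm, fun ip jp it jt hip hipi hijp hit hitj hjjt hP hT a b hipa hajp hitb
      hbjt => ?_⟩
    rw [← hone]
    exact hD.eq_of_mem_block hip hit hP hT (by rw [hm, hrefl]) hipa hajp hitb hbjt hipi hijp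
      hitj hjjt
  · refine Or.inr ⟨hm, ?_⟩
    obtain ⟨π, hπ, hcost, hle⟩ := hD.exists_isTablePath hi hj (by simp [hone])
    refine ⟨π, hπ, hcost.symm, fun p hp hne => ?_⟩
    have hzero : D p.1 p.2 = 0 := by
      have h : D p.1 p.2 + 1 ≤ 0 + 1 := by
        calc D p.1 p.2 + 1 ≤ D p.1 p.2 + d (P i) (T j) := by gcongr; exact hd1 _ _ hm
          _ ≤ 0 + 1 := by rw [zero_add, ← hone]; exact hle p hp hne
      exact le_zero_iff.1 (ENNReal.le_of_add_le_add_right ENNReal.one_ne_top h)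
    obtain ⟨hp₁, hp₂⟩ := hπ.one_le_of_mem hp
    exact ⟨hzero, hD.eq_of_eq_zero hd1 hp₁ hp₂ hzero⟩

/-- with integer letter distances, if `D[i,j] = 1` then either
`P[i] = T[j]` (and then every homogeneous block-rectangle containing `(i,j)` has all
its values equal to 1), or `P[i] ≠ T[j]` and some cost-realizing path to `(i,j)` has
all its cells except `(i,j)` matching and zero-valued. -/
theorem one_cell_structure {α : Type*} (d : α → α → ℝ≥0∞) (P T : ℕ → α)
    (hint : ∀ a b, ∃ n : ℕ, d a b = n)
    (hrefl : ∀ a, d a a = 0) (hd1 : ∀ a b, a ≠ b → 1 ≤ d a b)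
    (D : ℕ → ℕ → ℝ≥0∞)
    (hD0 : ∀ j, D 0 j = 0) (hDi0 : ∀ i, 1 ≤ i → D i 0 = ⊤)
    (hrec : ∀ i j, 1 ≤ i → 1 ≤ j →
      D i j = min (min (D (i - 1) (j - 1)) (D (i - 1) j)) (D i (j - 1))
        + d (P i) (T j))
    (i j : ℕ) (hi : 1 ≤ i) (hj : 1 ≤ j) (hone : D i j = 1) :
    (P i = T j ∧
      ∀ ip jp it jt, 1 ≤ ip → ip ≤ i → i ≤ jp → 1 ≤ it → it ≤ j → j ≤ jt →
        (∀ x, ip ≤ x → x ≤ jp → P x = P i) → (∀ y, it ≤ y → y ≤ jt → T y = T j) →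
        ∀ a b, ip ≤ a → a ≤ jp → it ≤ b → b ≤ jt → D a b = 1) ∨
    (P i ≠ T j ∧
      ∃ π, IsTablePath i j π ∧
        D i j = (π.map (fun p => d (P p.1) (T p.2))).sum ∧
        ∀ p ∈ π, p ≠ (i, j) → D p.1 p.2 = 0 ∧ P p.1 = T p.2) :=
  one_cell_structure_general d P T hrefl hd1 D hD0 hDi0 hrec i j hi hj hone
end

section
/- Rounding up distances to multiples of γ gives a 2-approximation of DTW: if μ'(a,b) = ⌈μ(a,b)/γ⌉ where μ(a,b) ≥ γ for all distinct a,b and μ(a,a)=0, then for all strings X, Y: DTW_μ(X,Y) ≤ γ · DTW_{μ'}(X,Y) ≤ 2 · DTW_μ(X,Y). -/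
open scoped ENNReal NNReal

/-- A warping path for strings of lengths `m`, `n` (1-based grid). -/
def IsWarpingPath (m n : ℕ) (π : List (ℕ × ℕ)) : Prop :=
  π ≠ [] ∧ π.head? = some (1, 1) ∧ π.getLast? = some (m, n) ∧ π.Chain' isStep

/-- Cost of a path: sum of letter distances over its vertices (1-based indexing). -/
noncomputable def pathCost {α : Type*} [Inhabited α] (d : α → α → ℝ≥0∞)
    (X Y : List α) (π : List (ℕ × ℕ)) : ℝ≥0∞ :=
  (π.map (fun p => d (X.getD (p.1 - 1) default) (Y.getD (p.2 - 1) default))).sum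

open Classical in
/-- DTW distance: 0 if both strings empty, otherwise the infimum of warping path costs
(`⊤` when no warping path exists, e.g. exactly one string is empty). -/
noncomputable def dtw {α : Type*} [Inhabited α] (d : α → α → ℝ≥0∞)
    (X Y : List α) : ℝ≥0∞ :=
  if X = [] ∧ Y = [] then 0
  else ⨅ π : {π : List (ℕ × ℕ) // IsWarpingPath X.length Y.length π},
    pathCost d X Y π.1

/-! Rounding `x ≥ 0` up to a multiple of `γ > 0` increases it by less than `γ`; when every
nonzero letter distance is at least `γ`, this at most doubles each letter distance. Both bounds
hold letter by letter, and `dtw` is monotone and positively homogeneous in the letter distance,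
so they pass to DTW. -/

section RoundUp

variable {K : Type*} [Semifield K] [LinearOrder K] [IsStrictOrderedRing K] [FloorSemiring K]

theorem le_mul_ceil_div {γ : K} (hγ : 0 < γ) (x : K) : x ≤ γ * ⌈x / γ⌉₊ :=
  calc x = γ * (x / γ) := (mul_div_cancel₀ x hγ.ne').symm
    _ ≤ γ * ⌈x / γ⌉₊ := mul_le_mul_of_nonneg_left (Nat.le_ceil _) hγ.le

theorem mul_ceil_div_le_add {γ x : K} (hγ : 0 < γ) (hx : 0 ≤ x) : γ * ⌈x / γ⌉₊ ≤ x + γ :=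
  calc γ * ⌈x / γ⌉₊ ≤ γ * (x / γ + 1) :=
        mul_le_mul_of_nonneg_left (Nat.ceil_lt_add_one (div_nonneg hx hγ.le)).le hγ.le
    _ = x + γ := by rw [mul_add, mul_one, mul_div_cancel₀ x hγ.ne']

theorem mul_ceil_div_le_two_mul {γ x : K} (hγ : 0 < γ) (hx : x = 0 ∨ γ ≤ x) :
    γ * ⌈x / γ⌉₊ ≤ 2 * x := by
  rcases hx with rfl | hγx
  · simp
  · calc γ * ⌈x / γ⌉₊ ≤ x + γ := mul_ceil_div_le_add hγ (hγ.le.trans hγx)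
      _ ≤ 2 * x := by rw [two_mul]; exact add_le_add le_rfl hγx

end RoundUp

section DTW

variable {α : Type*} [Inhabited α]

theorem dtw_mono {d₁ d₂ : α → α → ℝ≥0∞} (h : ∀ a b, d₁ a b ≤ d₂ a b) (X Y : List α) :
    dtw d₁ X Y ≤ dtw d₂ X Y := by
  unfold dtw
  split_ifs
  · exact le_rfl
  · exact iInf_mono fun π => List.sum_le_sum fun _ _ => h _ _

theorem dtw_const_mul {c : ℝ≥0∞} (hc₀ : c ≠ 0) (hc : c ≠ ⊤) (d : α → α → ℝ≥0∞)
    (X Y : List α) : dtw (fun a b => c * d a b) X Y = c * dtw d X Y := by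
  unfold dtw
  split_ifs
  · simp
  · rw [ENNReal.mul_iInf_of_ne hc₀ hc]
    exact iInf_congr fun π => List.sum_map_mul_left _ _ _

end DTW

/-- rounding letter distances up to multiples of `γ` gives a
2-approximation of DTW: with `μ'(a,b) = ⌈μ(a,b)/γ⌉`,
`DTW_μ(X,Y) ≤ γ·DTW_{μ'}(X,Y) ≤ 2·DTW_μ(X,Y)`. -/
theorem dtw_round_two_approx {α : Type*} [Inhabited α]
    (μ : α → α → ℝ≥0) (γ : ℝ≥0) (hγ : 0 < γ)
    (hself : ∀ a, μ a a = 0) (hsep : ∀ a b, a ≠ b → γ ≤ μ a b) (X Y : List α) :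
    dtw (fun a b => (μ a b : ℝ≥0∞)) X Y ≤
        (γ : ℝ≥0∞) * dtw (fun a b => ((⌈μ a b / γ⌉₊ : ℕ) : ℝ≥0∞)) X Y ∧
      (γ : ℝ≥0∞) * dtw (fun a b => ((⌈μ a b / γ⌉₊ : ℕ) : ℝ≥0∞)) X Y ≤
        2 * dtw (fun a b => (μ a b : ℝ≥0∞)) X Y := by
  rw [← dtw_const_mul (by exact_mod_cast hγ.ne') ENNReal.coe_ne_top]
  have hzero_or_ge (a b : α) : μ a b = 0 ∨ γ ≤ μ a b := by
    by_cases hab : a = b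
    · exact .inl (hab ▸ hself a)
    · exact .inr (hsep a b hab)
  refine ⟨dtw_mono (fun a b => ?_) X Y, ?_⟩
  · exact_mod_cast le_mul_ceil_div hγ (μ a b)
  · calc _ ≤ dtw (fun a b => 2 * (μ a b : ℝ≥0∞)) X Y :=
          dtw_mono (fun a b => by exact_mod_cast mul_ceil_div_le_two_mul hγ (hzero_or_ge a b)) X Y
      _ = 2 * dtw (fun a b => (μ a b : ℝ≥0∞)) X Y :=
          dtw_const_mul two_ne_zero ENNReal.ofNat_ne_top _ X Y
end

section
/- DTW under r-simplification does not increase: for all strings X, Y of length at most L over Σ and r ≥ 1, DTW_{μ_τ}(s_r(X), s_r(Y)) ≤ DTW_{μ_τ}(X, Y), where s_r replaces each letter a by its highest ancestor in τ reachable from a via edges of weight ≤ r/4. -/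
open scoped ENNReal

open scoped NNReal

/-- Maximum weight among the first `n` edges on the path from `u` towards the root
(the edge above a node `w` has weight `weight w`). -/
noncomputable def upMax {V : Type*} (parent : V → V) (weight : V → ℝ≥0)
    (u : V) (n : ℕ) : ℝ≥0 :=
  (Finset.range n).sup (fun k => weight (parent^[k] u))

/-- The (well-separated) tree metric: the maximum weight of an edge on the shortest
path between `u` and `v`, expressed as the infimum over common ancestors of the
maximum edge weight on the path through that ancestor. -/
noncomputable def treeDist {V : Type*} (parent : V → V) (weight : V → ℝ≥0)
    (u v : V) : ℝ≥0∞ :=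
  ⨅ p : {p : ℕ × ℕ // parent^[p.1] u = parent^[p.2] v},
    ((max (upMax parent weight u p.1.1) (upMax parent weight v p.1.2) : ℝ≥0) : ℝ≥0∞)

/-! Since DTW compares the two strings along the same warping paths, it suffices that the
simplification `s` is 1-Lipschitz for the tree metric. Take a common ancestor `c` of `a` and `b`.
If `c` lies on or above both `s a` and `s b`, the path through `c` from `s a` to `s b` uses only
edges of the path from `a` to `b`. Otherwise `c` is reached from one side, say `a`, through
light edges (weight ≤ r/4) only; by monotonicity of the weights the edges from `b` up to `c`
are light too, so `a` and `b` have the same highest light ancestor and `s a = s b`. -/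

section Warping

lemma isStep.le {p q : ℕ × ℕ} (h : isStep p q) : p ≤ q := by
  rcases h with ⟨h₁, h₂⟩ | ⟨h₁, h₂⟩ | ⟨h₁, h₂⟩ <;> exact Prod.le_def.2 (by omega)

lemma IsWarpingPath.mem_Icc {m n : ℕ} {π : List (ℕ × ℕ)} (h : IsWarpingPath m n π)
    {p : ℕ × ℕ} (hp : p ∈ π) : p ∈ Set.Icc (1, 1) (m, n) := by
  obtain ⟨-, hhead, hlast, hchain⟩ := h
  have hpw : π.Pairwise (· ≤ ·) := List.isChain_iff_pairwise.mp (hchain.imp fun _ _ => isStep.le)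
  rw [List.head?_eq_some_head (List.ne_nil_of_mem hp), Option.some_inj] at hhead
  rw [List.getLast?_eq_some_getLast (List.ne_nil_of_mem hp), Option.some_inj] at hlast
  exact ⟨hhead ▸ hpw.rel_head hp, hlast ▸ hpw.rel_getLast hp⟩

variable {α β : Type*} [Inhabited α] [Inhabited β] (d : α → α → ℝ≥0∞) (d' : β → β → ℝ≥0∞)
  {f : α → β}

lemma pathCost_map_le (hf : ∀ a b, d' (f a) (f b) ≤ d a b) {X Y : List α}
    {π : List (ℕ × ℕ)} (hπ : IsWarpingPath X.length Y.length π) :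
    pathCost d' (X.map f) (Y.map f) π ≤ pathCost d X Y π := by
  refine List.sum_le_sum fun p hp => ?_
  obtain ⟨⟨h₁, h₂⟩, ⟨h₃, h₄⟩⟩ := hπ.mem_Icc hp
  have hi : p.1 - 1 < X.length := by simp only at *; omega
  have hj : p.2 - 1 < Y.length := by simp only at *; omega
  simp only [List.getD_eq_getElem?_getD, List.getElem?_map, List.getElem?_eq_getElem hi,
    List.getElem?_eq_getElem hj, Option.map_some, Option.getD_some]
  exact hf _ _

theorem dtw_map_le (hf : ∀ a b, d' (f a) (f b) ≤ d a b) (X Y : List α) :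
    dtw d' (X.map f) (Y.map f) ≤ dtw d X Y := by
  unfold dtw
  simp only [List.map_eq_nil_iff]
  split_ifs
  · exact le_rfl
  · exact le_iInf fun π =>
      (iInf_le _ ⟨π.1, by simpa using π.2⟩).trans (pathCost_map_le d d' hf π.2)

end Warping

section Tree

variable {V : Type*} (parent : V → V) (weight : V → ℝ≥0) (root : V)

def IsHighestLightAncestor (t : ℝ≥0) (a c : V) : Prop :=
  ∃ n, parent^[n] a = c ∧ (∀ k < n, weight (parent^[k] a) ≤ t) ∧ (c = root ∨ t < weight c)

variable {parent weight root}

theorem IsHighestLightAncestor.unique (hroot : parent root = root) {t : ℝ≥0} {a c₁ c₂ : V}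
    (h₁ : IsHighestLightAncestor parent weight root t a c₁)
    (h₂ : IsHighestLightAncestor parent weight root t a c₂) : c₁ = c₂ := by
  obtain ⟨n₁, rfl, hl₁, hc₁⟩ := h₁
  obtain ⟨n₂, rfl, hl₂, hc₂⟩ := h₂
  wlog hn : n₁ < n₂ generalizing n₁ n₂
  · obtain hn | hn := (not_lt.1 hn).lt_or_eq
    · exact (this n₂ hl₂ hc₂ n₁ hl₁ hc₁ hn).symm
    · rw [hn]
  have hroot₁ : parent^[n₁] a = root := hc₁.resolve_right (hl₂ n₁ hn).not_gt
  rw [← Nat.sub_add_cancel hn.le, Function.iterate_add_apply, hroot₁,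
    Function.iterate_fixed hroot]

lemma monotone_weight_iterate (hmono : ∀ v, weight v ≤ weight (parent v)) (a : V) :
    Monotone fun k => weight (parent^[k] a) :=
  monotone_nat_of_le_succ fun k => by
    rw [Function.iterate_succ_apply']
    exact hmono _

theorem IsHighestLightAncestor.of_meet (hmono : ∀ v, weight v ≤ weight (parent v))
    {t : ℝ≥0} {a b c : V} {i j n : ℕ} (hmeet : parent^[i] a = parent^[j] b) (hin : i < n)
    (hn : parent^[n] a = c) (hl : ∀ k < n, weight (parent^[k] a) ≤ t)
    (hc : c = root ∨ t < weight c) : IsHighestLightAncestor parent weight root t b c := by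
  have hshift (k : ℕ) : parent^[k + j] b = parent^[k + i] a := by
    rw [Function.iterate_add_apply, Function.iterate_add_apply, hmeet]
  refine ⟨n - i + j, by rw [hshift, Nat.sub_add_cancel hin.le, hn], fun k hk => ?_, hc⟩
  obtain hkj | hjk := lt_or_ge k j
  · calc weight (parent^[k] b) ≤ weight (parent^[j] b) :=
          monotone_weight_iterate hmono b hkj.le
      _ = weight (parent^[0 + i] a) := by rw [← hshift, zero_add]
      _ ≤ t := hl _ (by omega)
  · rw [← Nat.sub_add_cancel hjk, hshift]
    exact hl _ (by omega)

lemma upMax_iterate_le (a : V) (m n : ℕ) :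
    upMax parent weight (parent^[n] a) m ≤ upMax parent weight a (m + n) :=
  Finset.sup_le fun k hk => by
    rw [← Function.iterate_add_apply]
    exact Finset.le_sup (f := fun k => weight (parent^[k] a))
      (by simp only [Finset.mem_range] at hk ⊢; omega)

@[simp]
lemma treeDist_self (a : V) : treeDist parent weight a a = 0 :=
  nonpos_iff_eq_zero.1 <| (iInf_le _ ⟨(0, 0), rfl⟩).trans (by simp [upMax])

theorem treeDist_le_of_isHighestLightAncestor (hroot : parent root = root)
    (hmono : ∀ v, weight v ≤ weight (parent v)) {t : ℝ≥0} {s : V → V}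
    (hs : ∀ a, IsHighestLightAncestor parent weight root t a (s a)) (a b : V) :
    treeDist parent weight (s a) (s b) ≤ treeDist parent weight a b := by
  refine le_iInf fun ⟨(i, j), hij⟩ => ?_
  obtain ⟨na, hna, hla, hsa⟩ := hs a
  obtain ⟨nb, hnb, hlb, hsb⟩ := hs b
  by_cases hi : i < na
  · rw [(hs b).unique hroot (.of_meet hmono hij hi hna hla hsa), treeDist_self]
    exact zero_le
  by_cases hj : j < nb
  · rw [(hs a).unique hroot (.of_meet hmono hij.symm hj hnb hlb hsb), treeDist_self]
    exact zero_le
  rw [not_lt] at hi hj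
  have hmeet : parent^[i - na] (s a) = parent^[j - nb] (s b) := by
    rw [← hna, ← hnb, ← Function.iterate_add_apply, ← Function.iterate_add_apply,
      Nat.sub_add_cancel hi, Nat.sub_add_cancel hj, hij]
  refine (iInf_le _ ⟨(i - na, j - nb), hmeet⟩).trans (ENNReal.coe_le_coe.2 (max_le_max ?_ ?_))
  · simpa only [← hna, Nat.sub_add_cancel hi] using upMax_iterate_le a (i - na) na
  · simpa only [← hnb, Nat.sub_add_cancel hj] using upMax_iterate_le b (j - nb) nb

end Tree

theorem dtw_simplification_le_general {V : Type*} [Inhabited V]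
    (parent : V → V) (weight : V → ℝ≥0) (root : V)
    (hroot : parent root = root)
    (hmono : ∀ v, weight v ≤ weight (parent v))
    (r : ℝ≥0) (s : V → V)
    (hs : ∀ a, ∃ n, parent^[n] a = s a ∧
      (∀ k, k < n → weight (parent^[k] a) ≤ r / 4) ∧
      (s a = root ∨ r / 4 < weight (s a)))
    (X Y : List V) :
    dtw (treeDist parent weight) (X.map s) (Y.map s) ≤
      dtw (treeDist parent weight) X Y :=
  dtw_map_le _ _ (treeDist_le_of_isHighestLightAncestor hroot hmono hs) X Y

/-- DTW under the well-separated tree metric does not increase under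
`r`-simplification, which replaces each letter `a` by its highest ancestor `s a`
reachable from `a` using only edges of weight `≤ r/4`. -/
theorem dtw_simplification_le {V : Type*} [Inhabited V]
    (parent : V → V) (weight : V → ℝ≥0) (root : V)
    (hroot : parent root = root) (hreach : ∀ v, ∃ n, parent^[n] v = root)
    (hmono : ∀ v, weight v ≤ weight (parent v))
    (r : ℝ≥0) (hr : 1 ≤ r) (s : V → V)
    (hs : ∀ a, ∃ n, parent^[n] a = s a ∧
      (∀ k, k < n → weight (parent^[k] a) ≤ r / 4) ∧
      (s a = root ∨ r / 4 < weight (s a)))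
    (L : ℕ) (X Y : List V) (hX : X.length ≤ L) (hY : Y.length ≤ L) :
    dtw (treeDist parent weight) (X.map s) (Y.map s) ≤
      dtw (treeDist parent weight) X Y :=
  dtw_simplification_le_general parent weight root hroot hmono r s hs X Y
end
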